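/- Fix T > 0, t₀ ∈ (0,∞) and a probability measure μ₀ on ℝ^d with finite second moment. For every nonempty compact set Φ ⊂ C([0,T]; ℝ^d) (supremum norm) there exists φ* ∈ Φ such that J_{t₀,μ₀}(φ*) = inf_{φ∈Φ} J_{t₀,μ₀}(φ), where the infimum is taken in [0,∞]. -/

import Mathlib

open MeasureTheory Set Filter
open scoped ENNReal

noncomputable section

abbrev Ed (d : ℕ) : Type := EuclideanSpace ℝ (Fin d)

/-- `f` is absolutely continuous on `[0,T]` with (integrable) derivative `f'`
whose norm is square integrable. -/
def HasL2Deriv {d : ℕ} (T : ℝ) (f f' : ℝ → Ed d) : Prop :=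
  IntervalIntegrable f' volume 0 T ∧
  IntervalIntegrable (fun s => ‖f' s‖ ^ 2) volume 0 T ∧
  ∀ t ∈ Icc (0:ℝ) T, f t = f 0 + ∫ s in (0:ℝ)..t, f' s

/-- The drift mismatch appearing in the rate function of the generalized
self-interacting diffusion with initial data `(t₀, μ₀)`. -/
def drift {d : ℕ} (V F : Ed d → ℝ) (t₀ : ℝ) (μ₀ : Measure (Ed d))
    (f f' : ℝ → Ed d) (t : ℝ) : Ed d :=
  f' t + gradient V (f t) + (t₀ / (t₀ + t)) • (∫ u, gradient F (f t - u) ∂μ₀)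
    + (1 / (t₀ + t)) • (∫ s in (0:ℝ)..t, gradient F (f t - f s))

/-- The (unnormalized) rate function `J_{t₀,μ₀}` of the generalized self-interacting
diffusion, with values in `[0,∞]`. -/
noncomputable def Jfun {d : ℕ} (V F : Ed d → ℝ) (T t₀ : ℝ) (μ₀ : Measure (Ed d))
    (f : ℝ → Ed d) : ℝ≥0∞ :=
  ⨅ (f' : ℝ → Ed d) (_ : HasL2Deriv T f f'),
    ENNReal.ofReal (∫ t in (0:ℝ)..T, ‖drift V F t₀ μ₀ f f' t‖ ^ 2)

/-!
It suffices that `φ ↦ J(φ)` is lower semicontinuous on `C([0,T]; ℝ^d)`, since a lower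
semicontinuous function attains its infimum on a nonempty compact set. Write the drift mismatch
of a path as `ḟ + b(f)`, where `b(f)` (`pathDrift`) does not involve `ḟ`; since `∇V` and `∇F`
are Lipschitz, `b` is Lipschitz for the uniform norm on `[0,T]`. Let `f_k → f` uniformly with
`‖ḟ_k + b(f_k)‖²_{L²} ≤ C`. By Banach–Alaoglu these mismatches have a weak cluster point `v`
with `‖v‖² ≤ C`; as `b(f_k) → b(f)` strongly, `v - b(f)` is a weak cluster point of the
velocities `ḟ_k`, and testing against indicators of `(0,t]` shows that it is the velocity of `f`.
Hence `J(f) ≤ ‖v‖² ≤ C`.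
-/

open scoped Topology RealInnerProductSpace

theorem MapClusterPt.sub_of_tendsto {G : Type*} [TopologicalSpace G] [Sub G] [ContinuousSub G]
    [FirstCountableTopology G] {u v : ℕ → G} {x y : G} (hu : MapClusterPt x atTop u)
    (hv : Tendsto v atTop (𝓝 y)) : MapClusterPt (x - y) atTop fun k => u k - v k := by
  obtain ⟨ψ, hψ, hlim⟩ := hu.tendsto_subseq
  exact MapClusterPt.of_comp hψ.tendsto_atTop (hlim.sub (hv.comp hψ.tendsto_atTop)).mapClusterPt

theorem MapClusterPt.eq_of_tendsto {X : Type*} [TopologicalSpace X] [T2Space X]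
    [FirstCountableTopology X] {u : ℕ → X} {x y : X} (hu : MapClusterPt x atTop u)
    (hy : Tendsto u atTop (𝓝 y)) : x = y := by
  obtain ⟨ψ, hψ, hlim⟩ := hu.tendsto_subseq
  exact tendsto_nhds_unique hlim (hy.comp hψ.tendsto_atTop)

theorem MeasureTheory.Lp.norm_sq_eq_integral_norm_sq {α E : Type*} [MeasurableSpace α]
    [NormedAddCommGroup E] [InnerProductSpace ℝ E] {μ : Measure α} (w : Lp E 2 μ) :
    ‖w‖ ^ 2 = ∫ a, ‖w a‖ ^ 2 ∂μ := by
  simp only [← real_inner_self_eq_norm_sq, L2.inner_def]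

section Hilbert

variable {E : Type*} [NormedAddCommGroup E] [InnerProductSpace ℝ E] [CompleteSpace E]

/-- Banach–Alaoglu, transported to `E` through the Riesz isomorphism `E ≃ E⋆`. -/
theorem exists_norm_le_forall_mapClusterPt_inner {u : ℕ → E} {r : ℝ} (hu : ∀ k, ‖u k‖ ≤ r) :
    ∃ v : E, ‖v‖ ≤ r ∧ ∀ w : E, MapClusterPt ⟪v, w⟫ atTop fun k => ⟪u k, w⟫ := by
  let D : ℕ → WeakDual ℝ E := fun k => StrongDual.toWeakDual (InnerProductSpace.toDual ℝ E (u k))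
  have hD : map D atTop ≤ 𝓟 (WeakDual.toStrongDual ⁻¹' Metric.closedBall 0 r) :=
    le_principal_iff.2 <| mem_map.2 <| Eventually.of_forall fun k => by
      simpa [D] using hu k
  obtain ⟨ℓ, hℓr, hℓ⟩ := (WeakDual.isCompact_closedBall (𝕜 := ℝ) 0 r).exists_clusterPt hD
  refine ⟨(InnerProductSpace.toDual ℝ E).symm (WeakDual.toStrongDual ℓ), ?_, fun w => ?_⟩
  · simpa using hℓr
  · have := MapClusterPt.continuousAt_comp (WeakDual.eval_continuous w).continuousAt
      (show MapClusterPt ℓ atTop D from hℓ)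
    simpa [D, Function.comp_def, InnerProductSpace.toDual_symm_apply] using this

end Hilbert

section Lp

variable {α E : Type*} [MeasurableSpace α] [NormedAddCommGroup E]

theorem tendsto_toLp_of_tendstoUniformlyOn {μ : Measure α} [IsFiniteMeasure μ] {p : ℝ≥0∞}
    [Fact (1 ≤ p)] {s : Set α} (hs : ∀ᵐ x ∂μ, x ∈ s) {ι : Type*} {l : Filter ι}
    {F : ι → α → E} {f : α → E} (hF : ∀ i, MemLp (F i) p μ) (hf : MemLp f p μ)
    (h : TendstoUniformlyOn F f l s) :
    Tendsto (fun i => (hF i).toLp (F i)) l (𝓝 (hf.toLp f)) := by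
  rw [Metric.tendsto_nhds]
  intro ε hε
  set c : ℝ := (measureUnivNNReal μ : ℝ) ^ p.toReal⁻¹
  have hδ : 0 < ε / (c + 1) := by positivity
  filter_upwards [Metric.tendstoUniformlyOn_iff.1 h _ hδ] with i hi
  rw [dist_eq_norm, ← MemLp.toLp_sub]
  calc _ ≤ c * (ε / (c + 1)) := by
        refine Lp.norm_le_of_ae_bound hδ.le ?_
        filter_upwards [hs, ((hF i).sub hf).coeFn_toLp] with x hx hx'
        rw [hx', Pi.sub_apply, ← dist_eq_norm, dist_comm]
        exact (hi x hx).le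
    _ < ε := by
      rw [mul_div_assoc', div_lt_iff₀ (by positivity)]
      nlinarith [show 0 ≤ c by positivity]

theorem ContinuousOn.memLp_restrict_Ioc {f : ℝ → E} {a b : ℝ} (hf : ContinuousOn f (Icc a b))
    (p : ℝ≥0∞) : MemLp f p (volume.restrict (Ioc a b)) := by
  obtain ⟨C, hC⟩ := isCompact_Icc.exists_bound_of_continuousOn hf
  refine MemLp.of_bound ((hf.mono Ioc_subset_Icc_self).aestronglyMeasurable measurableSet_Ioc)
    C ?_
  filter_upwards [ae_restrict_mem measurableSet_Ioc] with x hx using hC x (Ioc_subset_Icc_self hx)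

theorem intervalIntegral_congr_ae_restrict_Ioc [NormedSpace ℝ E] {T t : ℝ} {f g : ℝ → E}
    (h : f =ᵐ[volume.restrict (Ioc 0 T)] g) (ht : t ∈ Icc 0 T) :
    ∫ s in (0:ℝ)..t, f s = ∫ s in (0:ℝ)..t, g s := by
  rw [intervalIntegral.integral_of_le ht.1, intervalIntegral.integral_of_le ht.1]
  exact integral_congr_ae (ae_restrict_of_ae_restrict_of_subset (Ioc_subset_Ioc_right ht.2) h)

end Lp

section L2Interval

variable {E : Type*} [NormedAddCommGroup E] [InnerProductSpace ℝ E] [CompleteSpace E] {T : ℝ}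

theorem inner_indicatorConstLp_Ioc {t : ℝ} (ht : t ∈ Icc 0 T) (e : E)
    (z : Lp E 2 (volume.restrict (Ioc 0 T))) :
    ⟪indicatorConstLp 2 measurableSet_Ioc (measure_ne_top _ (Ioc 0 t)) e, z⟫
      = ⟪e, ∫ s in (0:ℝ)..t, z s⟫ := by
  rw [L2.inner_indicatorConstLp_eq_inner_setIntegral, Measure.restrict_restrict measurableSet_Ioc,
    inter_eq_self_of_subset_left (Ioc_subset_Ioc_right ht.2), intervalIntegral.integral_of_le ht.1]

theorem intervalIntegral_eq_sub_of_mapClusterPt_inner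
    {u : ℕ → Lp E 2 (volume.restrict (Ioc 0 T))} {v : Lp E 2 (volume.restrict (Ioc 0 T))}
    {f : ℕ → ℝ → E} {g : ℝ → E} (hu : ∀ k, ∀ t ∈ Icc 0 T, ∫ s in (0:ℝ)..t, u k s = f k t - f k 0)
    (hfg : ∀ t, Tendsto (fun k => f k t) atTop (𝓝 (g t)))
    (hv : ∀ w, MapClusterPt ⟪v, w⟫ atTop fun k => ⟪u k, w⟫) {t : ℝ} (ht : t ∈ Icc 0 T) :
    ∫ s in (0:ℝ)..t, v s = g t - g 0 := by
  refine ext_inner_left ℝ fun e => ?_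
  have hcl := hv (indicatorConstLp 2 measurableSet_Ioc (measure_ne_top _ (Ioc 0 t)) e)
  simp only [real_inner_comm (indicatorConstLp 2 _ _ e), inner_indicatorConstLp_Ioc ht,
    hu _ t ht] at hcl
  exact hcl.eq_of_tendsto (tendsto_const_nhds.inner ((hfg t).sub (hfg 0)))

end L2Interval

section PathDrift

variable {E : Type*} [NormedAddCommGroup E]

theorem integrable_comp_sub_of_lipschitzWith [MeasurableSpace E] [BorelSpace E]
    [SecondCountableTopology E] {gF : E → E} {K : NNReal} (hgF : LipschitzWith K gF)
    {μ₀ : Measure E} [IsFiniteMeasure μ₀] (hμ₀ : Integrable (fun u => ‖u‖) μ₀) (x : E) :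
    Integrable (fun u => gF (x - u)) μ₀ := by
  refine Integrable.mono' ((integrable_const ‖gF x‖).add (hμ₀.const_mul K))
    (hgF.continuous.comp (continuous_sub_left x)).aestronglyMeasurable
    (Eventually.of_forall fun u => ?_)
  have := hgF.norm_sub_le (x - u) x
  rw [sub_sub_cancel_left, norm_neg] at this
  simp only [Pi.add_apply]
  linarith [norm_le_norm_add_norm_sub' (gF (x - u)) (gF x)]

variable [NormedSpace ℝ E]

def meanFieldGrad [MeasurableSpace E] (gF : E → E) (μ₀ : Measure E) (x : E) : E :=
  ∫ u, gF (x - u) ∂μ₀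

def interactionGrad (gF : E → E) (f : ℝ → E) (t : ℝ) : E :=
  ∫ s in (0:ℝ)..t, gF (f t - f s)

def pathDrift [MeasurableSpace E] (gV gF : E → E) (t₀ : ℝ) (μ₀ : Measure E) (f : ℝ → E)
    (t : ℝ) : E :=
  gV (f t) + (t₀ / (t₀ + t)) • meanFieldGrad gF μ₀ (f t) + (1 / (t₀ + t)) • interactionGrad gF f t

theorem lipschitzWith_meanFieldGrad [MeasurableSpace E] [BorelSpace E]
    [SecondCountableTopology E] {gF : E → E} {K : NNReal} (hgF : LipschitzWith K gF)
    {μ₀ : Measure E} [IsProbabilityMeasure μ₀] (hμ₀ : Integrable (fun u => ‖u‖) μ₀) :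
    LipschitzWith K (meanFieldGrad gF μ₀) := by
  refine LipschitzWith.of_dist_le_mul fun x y => ?_
  rw [dist_eq_norm, dist_eq_norm, meanFieldGrad, meanFieldGrad,
    ← integral_sub (integrable_comp_sub_of_lipschitzWith hgF hμ₀ x)
      (integrable_comp_sub_of_lipschitzWith hgF hμ₀ y)]
  calc ‖∫ u, (gF (x - u) - gF (y - u)) ∂μ₀‖ ≤ ∫ _u, (K : ℝ) * ‖x - y‖ ∂μ₀ :=
        norm_integral_le_of_norm_le (integrable_const _) (Eventually.of_forall fun u => by
          simpa only [sub_sub_sub_cancel_right] using hgF.norm_sub_le (x - u) (y - u))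
    _ = K * ‖x - y‖ := by simp

theorem continuous_interactionGrad {gF : E → E} {f : ℝ → E} (hgF : Continuous gF)
    (hf : Continuous f) : Continuous (interactionGrad gF f) :=
  intervalIntegral.continuous_parametric_intervalIntegral_of_continuous (by fun_prop)
    continuous_id

theorem norm_interactionGrad_sub_le {gF : E → E} {K : NNReal} (hgF : LipschitzWith K gF)
    {f g : ℝ → E} (hf : Continuous f) (hg : Continuous g) {ε : ℝ}
    (hfg : ∀ s, ‖f s - g s‖ ≤ ε) {t : ℝ} (ht : 0 ≤ t) :
    ‖interactionGrad gF f t - interactionGrad gF g t‖ ≤ 2 * K * ε * t := by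
  have hint : ∀ h : ℝ → E, Continuous h →
      IntervalIntegrable (fun s => gF (h t - h s)) volume 0 t :=
    fun h hh => (hgF.continuous.comp (continuous_const.sub hh)).intervalIntegrable _ _
  rw [interactionGrad, interactionGrad, ← intervalIntegral.integral_sub (hint f hf) (hint g hg)]
  have := intervalIntegral.norm_integral_le_of_norm_le_const (a := 0) (b := t)
    (C := 2 * K * ε) (f := fun s => gF (f t - f s) - gF (g t - g s)) fun s _ => by
      have hdiff : ‖f t - f s - (g t - g s)‖ ≤ 2 * ε := by
        rw [sub_sub_sub_comm]
        linarith [norm_sub_le (f t - g t) (f s - g s), hfg t, hfg s]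
      calc _ ≤ K * ‖f t - f s - (g t - g s)‖ := hgF.norm_sub_le _ _
        _ ≤ K * (2 * ε) := by gcongr
        _ = 2 * K * ε := by ring
  rwa [sub_zero, abs_of_nonneg ht] at this

variable [MeasurableSpace E] [BorelSpace E] [SecondCountableTopology E]
  {gV gF : E → E} {KV KF : NNReal} {t₀ : ℝ} {μ₀ : Measure E} [IsProbabilityMeasure μ₀]

theorem continuousOn_pathDrift (hgV : Continuous gV) (hgF : LipschitzWith KF gF)
    (hμ₀ : Integrable (fun u => ‖u‖) μ₀) (ht₀ : 0 < t₀) {f : ℝ → E} (hf : Continuous f) :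
    ContinuousOn (pathDrift gV gF t₀ μ₀ f) (Ici 0) := by
  have hden : ∀ t ∈ Ici (0:ℝ), t₀ + t ≠ 0 := fun t ht => by
    have : (0:ℝ) ≤ t := ht
    positivity
  have hW := (lipschitzWith_meanFieldGrad hgF hμ₀).continuous
  have hG := continuous_interactionGrad hgF.continuous hf
  unfold pathDrift
  refine ((hgV.comp hf).continuousOn.add ?_).add ?_
  · exact (continuousOn_const.div (by fun_prop) hden).smul (hW.comp hf).continuousOn
  · exact (continuousOn_const.div (by fun_prop) hden).smul hG.continuousOn

theorem norm_pathDrift_sub_le (hgV : LipschitzWith KV gV) (hgF : LipschitzWith KF gF)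
    (hμ₀ : Integrable (fun u => ‖u‖) μ₀) (ht₀ : 0 < t₀) {f g : ℝ → E} (hf : Continuous f)
    (hg : Continuous g) {ε : ℝ} (hfg : ∀ s, ‖f s - g s‖ ≤ ε) {T t : ℝ} (ht : t ∈ Icc 0 T) :
    ‖pathDrift gV gF t₀ μ₀ f t - pathDrift gV gF t₀ μ₀ g t‖
      ≤ (KV + KF + 2 * KF * T / t₀) * ε := by
  have hε : 0 ≤ ε := (norm_nonneg _).trans (hfg 0)
  have htt : 0 < t₀ + t := by linarith [ht.1]
  have hV : ‖gV (f t) - gV (g t)‖ ≤ KV * ε :=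
    (hgV.norm_sub_le _ _).trans (mul_le_mul_of_nonneg_left (hfg t) KV.2)
  have hW : ‖meanFieldGrad gF μ₀ (f t) - meanFieldGrad gF μ₀ (g t)‖ ≤ KF * ε :=
    ((lipschitzWith_meanFieldGrad hgF hμ₀).norm_sub_le _ _).trans
      (mul_le_mul_of_nonneg_left (hfg t) KF.2)
  have hG := norm_interactionGrad_sub_le hgF hf hg hfg ht.1
  have hc₁ : ‖t₀ / (t₀ + t)‖ ≤ 1 := by
    rw [Real.norm_of_nonneg (by positivity), div_le_one htt]
    linarith [ht.1]
  have hc₂ : ‖1 / (t₀ + t)‖ ≤ 1 / t₀ := by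
    rw [Real.norm_of_nonneg (by positivity)]
    exact one_div_le_one_div_of_le ht₀ (by linarith [ht.1])
  have hsplit : pathDrift gV gF t₀ μ₀ f t - pathDrift gV gF t₀ μ₀ g t
      = (gV (f t) - gV (g t))
        + (t₀ / (t₀ + t)) • (meanFieldGrad gF μ₀ (f t) - meanFieldGrad gF μ₀ (g t))
        + (1 / (t₀ + t)) • (interactionGrad gF f t - interactionGrad gF g t) := by
    simp only [pathDrift, smul_sub]
    abel
  rw [hsplit]
  refine (norm_add₃_le).trans ?_
  rw [norm_smul, norm_smul]
  calc _ ≤ KV * ε + 1 * (KF * ε) + 1 / t₀ * (2 * KF * ε * T) := by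
        gcongr
        exact hG.trans (by gcongr; exact ht.2)
    _ = (KV + KF + 2 * KF * T / t₀) * ε := by field_simp

theorem tendstoUniformlyOn_pathDrift (hgV : LipschitzWith KV gV) (hgF : LipschitzWith KF gF)
    (hμ₀ : Integrable (fun u => ‖u‖) μ₀) (ht₀ : 0 < t₀) {ι : Type*} {l : Filter ι}
    {f : ι → ℝ → E} {g : ℝ → E}
    (hf : ∀ i, Continuous (f i)) (hg : Continuous g) (hfg : TendstoUniformly f g l) (T : ℝ) :
    TendstoUniformlyOn (fun i => pathDrift gV gF t₀ μ₀ (f i)) (pathDrift gV gF t₀ μ₀ g) l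
      (Icc 0 T) := by
  rw [Metric.tendstoUniformlyOn_iff]
  intro ε hε
  set K : ℝ := KV + KF + 2 * KF * T / t₀
  have hδ : 0 < ε / (|K| + 1) := by positivity
  filter_upwards [Metric.tendstoUniformly_iff.1 hfg _ hδ] with i hi t ht
  rw [dist_eq_norm]
  calc _ ≤ K * (ε / (|K| + 1)) := norm_pathDrift_sub_le hgV hgF hμ₀ ht₀ hg (hf i)
        (fun s => by rw [← dist_eq_norm]; exact (hi s).le) ht
    _ ≤ |K| * (ε / (|K| + 1)) := by gcongr; exact le_abs_self K
    _ < ε := by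
      rw [mul_div_assoc', div_lt_iff₀ (by positivity)]
      nlinarith [abs_nonneg K]

theorem memLp_pathDrift (hgV : Continuous gV) (hgF : LipschitzWith KF gF)
    (hμ₀ : Integrable (fun u => ‖u‖) μ₀) (ht₀ : 0 < t₀) {f : ℝ → E} (hf : Continuous f)
    (p : ℝ≥0∞) (T : ℝ) : MemLp (pathDrift gV gF t₀ μ₀ f) p (volume.restrict (Ioc 0 T)) :=
  ((continuousOn_pathDrift hgV hgF hμ₀ ht₀ hf).mono Icc_subset_Ici_self).memLp_restrict_Ioc p

end PathDrift

section RateFunction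

variable {d : ℕ}

theorem drift_eq_add_pathDrift (V F : Ed d → ℝ) (t₀ : ℝ) (μ₀ : Measure (Ed d))
    (f f' : ℝ → Ed d) (t : ℝ) :
    drift V F t₀ μ₀ f f' t = f' t + pathDrift (gradient V) (gradient F) t₀ μ₀ f t := by
  simp only [drift, pathDrift, meanFieldGrad, interactionGrad]
  abel

theorem hasL2Deriv_iff {T : ℝ} (hT : 0 ≤ T) {f f' : ℝ → Ed d} :
    HasL2Deriv T f f' ↔ MemLp f' 2 (volume.restrict (Ioc 0 T)) ∧
      ∀ t ∈ Icc (0:ℝ) T, f t = f 0 + ∫ s in (0:ℝ)..t, f' s := by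
  simp only [HasL2Deriv, intervalIntegrable_iff_integrableOn_Ioc_of_le hT]
  constructor
  · rintro ⟨hf', hf'2, hf⟩
    exact ⟨(memLp_two_iff_integrable_sq_norm hf'.aestronglyMeasurable).2 hf'2, hf⟩
  · rintro ⟨hf', hf⟩
    exact ⟨hf'.integrable one_le_two,
      (memLp_two_iff_integrable_sq_norm hf'.aestronglyMeasurable).1 hf', hf⟩

theorem integral_norm_drift_sq_eq_norm_sq {V F : Ed d → ℝ} {t₀ : ℝ} {μ₀ : Measure (Ed d)}
    {T : ℝ} (hT : 0 ≤ T) {f f' : ℝ → Ed d} {w : Lp (Ed d) 2 (volume.restrict (Ioc 0 T))}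
    (hw : w =ᵐ[volume.restrict (Ioc 0 T)]
      fun t => f' t + pathDrift (gradient V) (gradient F) t₀ μ₀ f t) :
    ∫ t in (0:ℝ)..T, ‖drift V F t₀ μ₀ f f' t‖ ^ 2 = ‖w‖ ^ 2 := by
  rw [intervalIntegral.integral_of_le hT, Lp.norm_sq_eq_integral_norm_sq]
  refine integral_congr_ae ?_
  filter_upwards [hw] with t ht
  rw [ht, drift_eq_add_pathDrift]

variable {V F : Ed d → ℝ} {KV KF : NNReal} (hV : LipschitzWith KV (gradient V))
  (hF : LipschitzWith KF (gradient F)) {t₀ : ℝ} (ht₀ : 0 < t₀) {μ₀ : Measure (Ed d)}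
  [IsProbabilityMeasure μ₀] (hμ₀ : Integrable (fun u => ‖u‖) μ₀) {T : ℝ} (hT : 0 ≤ T)

include hV hF ht₀ hμ₀ hT

theorem Jfun_le_ofReal_of_tendstoUniformly {f : ℕ → ℝ → Ed d} {g : ℝ → Ed d}
    (hf : ∀ k, Continuous (f k)) (hg : Continuous g) (hfg : TendstoUniformly f g atTop)
    {f' : ℕ → ℝ → Ed d} (hf' : ∀ k, HasL2Deriv T (f k) (f' k)) {C : ℝ}
    (hC : ∀ k, ∫ t in (0:ℝ)..T, ‖drift V F t₀ μ₀ (f k) (f' k) t‖ ^ 2 ≤ C) :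
    Jfun V F T t₀ μ₀ g ≤ ENNReal.ofReal C := by
  have hb := fun h hh => memLp_pathDrift hV.continuous hF hμ₀ ht₀ (f := h) hh 2 T
  let u k := ((hasL2Deriv_iff hT).1 (hf' k)).1.toLp (f' k)
  let b k := (hb _ (hf k)).toLp
  let b₀ := (hb g hg).toLp
  have hb_lim : Tendsto b atTop (𝓝 b₀) :=
    tendsto_toLp_of_tendstoUniformlyOn (ae_restrict_mem measurableSet_Ioc) _ _
      ((tendstoUniformlyOn_pathDrift hV hF hμ₀ ht₀ hf hg hfg T).mono Ioc_subset_Icc_self)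
  have hdrift : ∀ k, ∫ t in (0:ℝ)..T, ‖drift V F t₀ μ₀ (f k) (f' k) t‖ ^ 2 = ‖u k + b k‖ ^ 2 :=
    fun k => integral_norm_drift_sq_eq_norm_sq hT <| by
      filter_upwards [Lp.coeFn_add (u k) (b k), ((hasL2Deriv_iff hT).1 (hf' k)).1.coeFn_toLp,
        (hb _ (hf k)).coeFn_toLp] with t h h₁ h₂
      rw [h, Pi.add_apply, h₁, h₂]
  have hC₀ : 0 ≤ C := (sq_nonneg _).trans ((hdrift 0).symm.le.trans (hC 0))
  obtain ⟨v, hvC, hv⟩ := exists_norm_le_forall_mapClusterPt_inner (u := fun k => u k + b k)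
    fun k => Real.le_sqrt_of_sq_le ((hdrift k).symm.le.trans (hC k))
  have hderiv : HasL2Deriv T g ⇑(v - b₀) := by
    refine (hasL2Deriv_iff hT).2 ⟨Lp.memLp _, fun t ht => ?_⟩
    rw [intervalIntegral_eq_sub_of_mapClusterPt_inner (u := u) (f := f) (fun k t ht => ?_)
      hfg.tendsto_at (fun w => ?_) ht, add_sub_cancel]
    · rw [intervalIntegral_congr_ae_restrict_Ioc (MemLp.coeFn_toLp _) ht, ((hf' k).2.2 t ht)]
      abel
    · simpa only [inner_sub_left, inner_add_left, add_sub_cancel_right] using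
        (hv w).sub_of_tendsto (hb_lim.inner (tendsto_const_nhds (x := w)))
  calc Jfun V F T t₀ μ₀ g ≤ ENNReal.ofReal (∫ t in (0:ℝ)..T, ‖drift V F t₀ μ₀ g ⇑(v - b₀) t‖ ^ 2) :=
        iInf₂_le _ hderiv
    _ = ENNReal.ofReal (‖v‖ ^ 2) := by
      rw [integral_norm_drift_sq_eq_norm_sq hT (w := v)]
      filter_upwards [Lp.coeFn_sub v b₀, (hb g hg).coeFn_toLp] with t h h₀
      rw [h, Pi.sub_apply, h₀, sub_add_cancel]
    _ ≤ ENNReal.ofReal C := ENNReal.ofReal_le_ofReal ((Real.le_sqrt (norm_nonneg _) hC₀).1 hvC)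

theorem Jfun_le_of_tendstoUniformly {f : ℕ → ℝ → Ed d} {g : ℝ → Ed d}
    (hf : ∀ k, Continuous (f k)) (hg : Continuous g) (hfg : TendstoUniformly f g atTop)
    {y : ℝ≥0∞} (hy : ∀ k, Jfun V F T t₀ μ₀ (f k) ≤ y) : Jfun V F T t₀ μ₀ g ≤ y := by
  refine ENNReal.le_of_forall_pos_le_add fun ε hε hy_top => ?_
  have hne : y + ε ≠ ⊤ := ENNReal.add_ne_top.2 ⟨hy_top.ne, ENNReal.coe_ne_top⟩
  have hlt : ∀ k, Jfun V F T t₀ μ₀ (f k) < y + ε := fun k =>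
    (hy k).trans_lt (ENNReal.lt_add_right hy_top.ne (by exact_mod_cast hε.ne'))
  have hf' : ∀ k, ∃ f', HasL2Deriv T (f k) f' ∧
      ∫ t in (0:ℝ)..T, ‖drift V F t₀ μ₀ (f k) f' t‖ ^ 2 ≤ (y + ε).toReal := fun k => by
    obtain ⟨f', hf'⟩ := iInf_lt_iff.1 (hlt k)
    obtain ⟨hderiv, hint⟩ := iInf_lt_iff.1 hf'
    exact ⟨f', hderiv, (ENNReal.ofReal_le_iff_le_toReal hne).1 hint.le⟩
  choose f' hderiv hint using hf'
  calc Jfun V F T t₀ μ₀ g ≤ ENNReal.ofReal (y + ε).toReal :=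
        Jfun_le_ofReal_of_tendstoUniformly hV hF ht₀ hμ₀ hT hf hg hfg hderiv hint
    _ = y + ε := ENNReal.ofReal_toReal hne

theorem lowerSemicontinuous_Jfun_comp_projIcc :
    LowerSemicontinuous fun φ : C(Icc 0 T, Ed d) =>
      Jfun V F T t₀ μ₀ (fun s => φ (projIcc 0 T hT s)) := by
  refine lowerSemicontinuous_iff_isClosed_preimage.2 fun y =>
    IsSeqClosed.isClosed fun θ φ hθ hlim => ?_
  exact Jfun_le_of_tendstoUniformly hV hF ht₀ hμ₀ hT
    (fun k => (θ k).continuous.comp continuous_projIcc) (φ.continuous.comp continuous_projIcc)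
    ((ContinuousMap.tendsto_iff_tendstoUniformly.1 hlim).comp _) hθ

end RateFunction

theorem stmt8_general {d : ℕ}
    (V F : Ed d → ℝ)
    (LV LF : ℝ) (hLV : 0 ≤ LV) (hLF : 0 ≤ LF)
    (hVlip : ∀ x y : Ed d, ‖gradient V x - gradient V y‖ ≤ LV * ‖x - y‖)
    (hFlip : ∀ x y : Ed d, ‖gradient F x - gradient F y‖ ≤ LF * ‖x - y‖)
    (T : ℝ) (hT : 0 < T) (t₀ : ℝ) (ht₀ : 0 < t₀)
    (μ₀ : Measure (Ed d)) (hprob : IsProbabilityMeasure μ₀)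
    (hμ₀ : Integrable (fun u => ‖u‖ ^ 2) μ₀)
    (Φ : Set C(↥(Icc (0:ℝ) T), Ed d)) (hΦc : IsCompact Φ) (hΦne : Φ.Nonempty) :
    ∃ φ ∈ Φ, Jfun V F T t₀ μ₀ (fun s => φ (projIcc 0 T hT.le s)) =
      ⨅ ψ ∈ Φ, Jfun V F T t₀ μ₀ (fun s => ψ (projIcc 0 T hT.le s)) := by
  have hV : LipschitzWith ⟨LV, hLV⟩ (gradient V) :=
    LipschitzWith.of_dist_le_mul fun x y => by
      rw [dist_eq_norm, dist_eq_norm]; exact hVlip x y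
  have hF : LipschitzWith ⟨LF, hLF⟩ (gradient F) :=
    LipschitzWith.of_dist_le_mul fun x y => by
      rw [dist_eq_norm, dist_eq_norm]; exact hFlip x y
  have hμ₁ : Integrable (fun u => ‖u‖) μ₀ :=
    (((memLp_two_iff_integrable_sq_norm aestronglyMeasurable_id).2 hμ₀).integrable
      one_le_two).norm
  obtain ⟨φ, hφ, hmin⟩ := ((lowerSemicontinuous_Jfun_comp_projIcc hV hF ht₀ hμ₁
    hT.le).lowerSemicontinuousOn Φ).exists_isMinOn hΦne hΦc
  exact ⟨φ, hφ, le_antisymm (le_iInf₂ fun ψ hψ => hmin hψ) (iInf₂_le φ hφ)⟩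

/-- Corollary 2.5: the infimum of the rate function over a nonempty
compact set of paths in `C([0,T]; ℝ^d)` is attained. -/
theorem stmt8 {d : ℕ} (hd : 1 ≤ d)
    (V F : Ed d → ℝ) (hV : ContDiff ℝ 2 V) (hF : ContDiff ℝ 2 F)
    (LV LF : ℝ) (hLV : 0 ≤ LV) (hLF : 0 ≤ LF)
    (hVlip : ∀ x y : Ed d, ‖gradient V x - gradient V y‖ ≤ LV * ‖x - y‖)
    (hFlip : ∀ x y : Ed d, ‖gradient F x - gradient F y‖ ≤ LF * ‖x - y‖)
    (T : ℝ) (hT : 0 < T) (t₀ : ℝ) (ht₀ : 0 < t₀)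
    (μ₀ : Measure (Ed d)) (hprob : IsProbabilityMeasure μ₀)
    (hμ₀ : Integrable (fun u => ‖u‖ ^ 2) μ₀)
    (Φ : Set C(↥(Icc (0:ℝ) T), Ed d)) (hΦc : IsCompact Φ) (hΦne : Φ.Nonempty) :
    ∃ φ ∈ Φ, Jfun V F T t₀ μ₀ (fun s => φ (projIcc 0 T hT.le s)) =
      ⨅ ψ ∈ Φ, Jfun V F T t₀ μ₀ (fun s => ψ (projIcc 0 T hT.le s)) :=
  stmt8_general V F LV LF hLV hLF hVlip hFlip T hT t₀ ht₀ μ₀ hprob hμ₀ Φ hΦc hΦne
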